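/- For every α ∈ (0,1] and every function u satisfying the stated conditions, there exists a positive constant C_{α,1} (depending on α and u) such that for every irrational x ∈ (0, ᾱ) and every N ≥ 0, | Σ_{n=0}^{N} β_{α,n−1}·u(x_{α,n}) − Σ_{n=0}^{N} u(1/a_{α,n+1})/q_{α,n} | < C_{α,1}. -/

import Mathlib

open Set Filter

/-- The `α`-continued fraction map `A_α(x) = |1/x − ⌊1/x + 1 − α⌋|`. -/
noncomputable def Aa (α : ℝ) (x : ℝ) : ℝ := |1 / x - ⌊1 / x + 1 - α⌋|

/-- The orbit `x_{α,n}` of `x` under `A_α` (with `x_{α,0} = x`). -/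
noncomputable def xa (α x : ℝ) (n : ℕ) : ℝ := (Aa α)^[n] x

/-- `betaP α x (n+1) = β_{α,n} = x_{α,0}⋯x_{α,n}`; `betaP α x 0 = β_{α,-1} = 1`. -/
noncomputable def betaP (α x : ℝ) (n : ℕ) : ℝ := ∏ i ∈ Finset.range n, xa α x i

/-- `aa α x n = a_{α,n+1} = ⌊1/x_{α,n} + 1 − α⌋`. -/
noncomputable def aa (α x : ℝ) (n : ℕ) : ℤ := ⌊1 / xa α x n + 1 - α⌋

/-- `ea α x n = ε_{α,n}`: `ε_{α,0} = 1` and `ε_{α,n+1} = sign(1/x_{α,n} − a_{α,n+1})`. -/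
noncomputable def ea (α x : ℝ) : ℕ → ℝ
  | 0 => 1
  | n + 1 => if 0 < 1 / xa α x n - aa α x n then 1 else -1

/-- `pa α x (n+1) = p_{α,n}`; `pa α x 0 = p_{α,-1} = 1`. -/
noncomputable def pa (α x : ℝ) : ℕ → ℝ
  | 0 => 1
  | 1 => 0
  | n + 2 => aa α x n * pa α x (n + 1) + ea α x n * pa α x n

/-- `qa α x (n+1) = q_{α,n}`; `qa α x 0 = q_{α,-1} = 0`. -/
noncomputable def qa (α x : ℝ) : ℕ → ℝ
  | 0 => 0
  | 1 => 1
  | n + 2 => aa α x n * qa α x (n + 1) + ea α x n * qa α x n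

/-!
Split each term as `β_{n-1} (u(x_n) - u(1/a_{n+1})) + u(1/a_{n+1}) (β_{n-1} - 1/q_n)`.
Since `|1/x_n - a_{n+1}| = x_{n+1} ≤ 1` and `y² u'(y)` is bounded near `0`, the map `t ↦ u(1/t)` is
Lipschitz on `[1 + α, ∞)`, which bounds the first bracket when `a_{n+1} ≥ 2`; when `a_{n+1} = 1`
both points lie in `[1/2, 1]`, where the bound on `y u(y)` suffices. The recursions give
`q_n β_{n-1} + ε_n q_{n-1} β_n = 1` and `q` is nondecreasing, so `|β_{n-1} - 1/q_n| ≤ β_n`; together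
with `|u(1/a)| = O(a)` and `a_{n+1} x_n ≤ 2` this makes the second bracket `O(β_{n-1})` as well.
Finally `x_n x_{n+1} ≤ max(1/2, 1 - α) < 1`, so `β` decays geometrically along every other index
and `∑ β_{n-1}` is bounded independently of `x` and `N`.
-/

open Finset

theorem exists_abs_le_of_continuousOn_Ioc {g : ℝ → ℝ} {c L : ℝ}
    (hg : ContinuousOn g (Ioc 0 c)) (hlim : Tendsto g (nhdsWithin 0 (Ioi 0)) (nhds L)) :
    ∃ M, ∀ y ∈ Ioc 0 c, |g y| ≤ M := by
  classical
  have hext : ContinuousOn (Function.update g 0 L) (Icc 0 c) := by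
    rw [continuousOn_update_iff, Icc_sdiff_left]
    exact ⟨hg, fun _ => hlim.mono_left (nhdsWithin_mono _ Ioc_subset_Ioi_self)⟩
  obtain ⟨M, hM⟩ := isCompact_Icc.exists_bound_of_continuousOn hext
  refine ⟨M, fun y hy => ?_⟩
  simpa [Function.update_of_ne hy.1.ne'] using hM y (Ioc_subset_Icc_self hy)

theorem abs_sub_le_of_abs_sq_mul_deriv_le {u : ℝ → ℝ} {b M s t : ℝ} (hb : 0 < b)
    (hu : ∀ y ∈ Ioc 0 b⁻¹, DifferentiableAt ℝ u y)
    (hM : ∀ y ∈ Ioc 0 b⁻¹, |y ^ 2 * deriv u y| ≤ M) (hs : b ≤ s) (ht : b ≤ t) :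
    |u s⁻¹ - u t⁻¹| ≤ M * |s - t| := by
  have hmem : ∀ τ ∈ Ici b, τ⁻¹ ∈ Ioc 0 b⁻¹ := fun τ hτ =>
    ⟨inv_pos.2 (hb.trans_le hτ), inv_anti₀ hb hτ⟩
  have hderiv : ∀ τ ∈ Ici b,
      HasDerivWithinAt (fun τ => u τ⁻¹) (deriv u τ⁻¹ * -(τ ^ 2)⁻¹) (Ici b) τ := fun τ hτ =>
    ((hu _ (hmem τ hτ)).hasDerivAt.comp τ
      (hasDerivAt_inv (hb.trans_le hτ).ne')).hasDerivWithinAt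
  have hbound : ∀ τ ∈ Ici b, ‖deriv u τ⁻¹ * -(τ ^ 2)⁻¹‖ ≤ M := fun τ hτ => by
    simpa [Real.norm_eq_abs, abs_mul, mul_comm] using hM _ (hmem τ hτ)
  simpa [Real.norm_eq_abs] using
    (convex_Ici b).norm_image_sub_le_of_norm_hasDerivWithin_le hderiv hbound ht hs

theorem sum_range_prod_le_of_mul_succ_le {f : ℕ → ℝ} {r : ℝ} (hf0 : ∀ n, 0 ≤ f n)
    (hf1 : ∀ n, f n ≤ 1) (hr : ∀ n, f n * f (n + 1) ≤ r) (hr1 : r < 1) (N : ℕ) :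
    ∑ n ∈ range N, ∏ i ∈ range n, f i ≤ 2 / (1 - r) := by
  set P : ℕ → ℝ := fun n => ∏ i ∈ range n, f i
  set S : ℕ → ℝ := fun N => ∑ n ∈ range N, P n
  have hP0 : ∀ n, 0 ≤ P n := fun n => prod_nonneg fun i _ => hf0 i
  have hr0 : 0 ≤ r := (mul_nonneg (hf0 0) (hf0 1)).trans (hr 0)
  have hP : ∀ n, P (n + 2) ≤ r * P n := fun n => by
    calc P (n + 2) = P n * (f n * f (n + 1)) := by
          simp only [P, prod_range_succ, mul_assoc]
      _ ≤ P n * r := mul_le_mul_of_nonneg_left (hr n) (hP0 n)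
      _ = r * P n := mul_comm _ _
  have hS : S (N + 2) ≤ 2 + r * S N := by
    have hsplit : S (N + 2) = ∑ n ∈ range N, P (n + 2) + f 0 + 1 := by
      simp [S, P, sum_range_succ']
    rw [hsplit, mul_sum]
    linarith [sum_le_sum fun n (_ : n ∈ range N) => hP n, hf1 0]
  have hmono : S N ≤ S (N + 2) :=
    sum_le_sum_of_subset_of_nonneg (range_subset_range.2 (by omega)) fun n _ _ => hP0 n
  rw [le_div_iff₀ (by linarith)]
  nlinarith

theorem abs_le_div_of_abs_mul_self_le {u : ℝ → ℝ} {M y : ℝ} (hy : 0 < y)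
    (h : |y * u y| ≤ M) : |u y| ≤ M / y := by
  rw [le_div_iff₀ hy]
  calc |u y| * y = |y * u y| := by rw [abs_mul, abs_of_pos hy, mul_comm]
    _ ≤ M := h

namespace AlphaContinuedFraction

variable {α x y : ℝ} {n : ℕ}

theorem max_one_sub_le_one (hα : α ∈ Icc (0 : ℝ) 1) : max α (1 - α) ≤ 1 :=
  max_le hα.2 (by linarith [hα.1])

theorem sub_floor_add_one_sub_mem_Ico (α t : ℝ) : t - ⌊t + 1 - α⌋ ∈ Ico (α - 1) α := by
  constructor <;> linarith [Int.floor_le (t + 1 - α), Int.lt_floor_add_one (t + 1 - α)]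

theorem Aa_le (α y : ℝ) : Aa α y ≤ max α (1 - α) := by
  obtain ⟨h₁, h₂⟩ := sub_floor_add_one_sub_mem_Ico α (1 / y)
  exact abs_le.2 ⟨by linarith [le_max_right α (1 - α)], by linarith [le_max_left α (1 - α)]⟩

theorem irrational_Aa (hy : Irrational y) : Irrational (Aa α y) := by
  have h : Irrational (1 / y - ⌊1 / y + 1 - α⌋) := by
    simpa only [one_div] using hy.inv.sub_intCast _
  rcases abs_choice (1 / y - ⌊1 / y + 1 - α⌋) with h' | h'
  · rw [Aa, h']; exact h
  · rw [Aa, h']; exact h.neg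

theorem xa_succ (n : ℕ) : xa α x (n + 1) = Aa α (xa α x n) :=
  Function.iterate_succ_apply' _ _ _

theorem aa_le (n : ℕ) : (aa α x n : ℝ) ≤ 1 / xa α x n + 1 - α := Int.floor_le _

theorem lt_aa (n : ℕ) : 1 / xa α x n + 1 - α < aa α x n + 1 := Int.lt_floor_add_one _

theorem xa_succ_eq_abs (n : ℕ) : xa α x (n + 1) = |1 / xa α x n - aa α x n| := xa_succ n

theorem ea_succ (n : ℕ) :
    ea α x (n + 1) = if 0 < 1 / xa α x n - aa α x n then 1 else -1 := rfl

theorem irrational_xa (hirr : Irrational x) (n : ℕ) : Irrational (xa α x n) := by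
  induction n with
  | zero => exact hirr
  | succ n ih => rw [xa_succ]; exact irrational_Aa ih

theorem xa_pos (hirr : Irrational x) (hx0 : 0 < x) (n : ℕ) : 0 < xa α x n := by
  cases n with
  | zero => exact hx0
  | succ n =>
    exact lt_of_le_of_ne (by rw [xa_succ_eq_abs]; exact abs_nonneg _)
      (irrational_xa hirr (n + 1)).ne_zero.symm

theorem xa_le_one (hα : α ∈ Icc (0 : ℝ) 1) (hx1 : x ≤ 1) (n : ℕ) : xa α x n ≤ 1 := by
  cases n with
  | zero => exact hx1
  | succ n => rw [xa_succ]; exact (Aa_le α _).trans (max_one_sub_le_one hα)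

theorem ea_eq_one_or_neg_one (n : ℕ) : ea α x n = 1 ∨ ea α x n = -1 := by
  cases n with
  | zero => exact Or.inl rfl
  | succ n => rw [ea_succ]; split_ifs <;> simp

theorem one_div_xa_eq (hirr : Irrational x) (n : ℕ) :
    1 / xa α x n = aa α x n + ea α x (n + 1) * xa α x (n + 1) := by
  have hne : 1 / xa α x n - aa α x n ≠ 0 :=
    sub_ne_zero.2 (by simpa only [one_div] using (irrational_xa hirr n).inv.ne_int _)
  rw [xa_succ_eq_abs, ea_succ]
  split_ifs with h
  · rw [abs_of_pos h]; ring
  · rw [abs_of_neg (lt_of_le_of_ne (not_lt.1 h) hne)]; ring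

theorem aa_mul_xa_add (hirr : Irrational x) (hx0 : 0 < x) (n : ℕ) :
    aa α x n * xa α x n + ea α x (n + 1) * (xa α x n * xa α x (n + 1)) = 1 := by
  have h := one_div_xa_eq (α := α) hirr n
  field_simp [(xa_pos hirr hx0 n).ne'] at h
  linear_combination -h

theorem xa_succ_le_of_ea_eq_neg_one (h : ea α x (n + 1) = -1) : xa α x (n + 1) ≤ 1 - α := by
  rw [ea_succ] at h
  split_ifs at h with hpos
  · norm_num at h
  · rw [xa_succ_eq_abs, abs_of_nonpos (not_lt.1 hpos)]
    linarith [aa_le (α := α) (x := x) n]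

theorem one_le_aa (hα : α ≤ 1) (h0 : 0 < xa α x n) (h1 : xa α x n ≤ 1) :
    (1 : ℝ) ≤ aa α x n := by
  have : 1 ≤ 1 / xa α x n := by rw [le_div_iff₀ h0]; linarith
  exact_mod_cast Int.le_floor.2 (by push_cast; linarith)

theorem two_le_aa_of_ea_eq_neg_one (h0 : 0 < xa α x n) (h : ea α x n = -1) :
    (2 : ℝ) ≤ aa α x n := by
  cases n with
  | zero => norm_num [ea] at h
  | succ n =>
    have hle := xa_succ_le_of_ea_eq_neg_one h
    have hamgm : 2 ≤ 1 / xa α x (n + 1) + xa α x (n + 1) := by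
      rw [div_add' _ _ _ h0.ne', le_div_iff₀ h0]
      nlinarith [sq_nonneg (xa α x (n + 1) - 1)]
    exact_mod_cast Int.le_floor.2 (by push_cast; linarith)

theorem qa_add_two (n : ℕ) :
    qa α x (n + 2) = aa α x n * qa α x (n + 1) + ea α x n * qa α x n := rfl

theorem betaP_succ (n : ℕ) : betaP α x (n + 1) = betaP α x n * xa α x n :=
  prod_range_succ _ _

theorem betaP_pos (hirr : Irrational x) (hx0 : 0 < x) (n : ℕ) : 0 < betaP α x n :=
  prod_pos fun i _ => xa_pos hirr hx0 i

theorem qa_nonneg_and_le_succ (hα : α ∈ Icc (0 : ℝ) 1) (hirr : Irrational x)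
    (hx : x ∈ Ioc (0 : ℝ) 1) (n : ℕ) : 0 ≤ qa α x n ∧ qa α x n ≤ qa α x (n + 1) := by
  induction n with
  | zero => norm_num [qa]
  | succ n ih =>
    obtain ⟨hq0, hq⟩ := ih
    have h0 := xa_pos (α := α) hirr hx.1 n
    have ha := one_le_aa hα.2 h0 (xa_le_one hα hx.2 n)
    refine ⟨hq0.trans hq, ?_⟩
    rw [qa_add_two]
    rcases ea_eq_one_or_neg_one (α := α) (x := x) n with he | he
    · rw [he]; nlinarith
    · rw [he]; nlinarith [two_le_aa_of_ea_eq_neg_one h0 he]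

theorem one_le_qa_succ (hα : α ∈ Icc (0 : ℝ) 1) (hirr : Irrational x)
    (hx : x ∈ Ioc (0 : ℝ) 1) (n : ℕ) : 1 ≤ qa α x (n + 1) :=
  monotone_nat_of_le_succ (fun n => (qa_nonneg_and_le_succ hα hirr hx n).2)
    (Nat.le_add_left 1 n)

theorem qa_succ_mul_betaP_add (hirr : Irrational x) (hx0 : 0 < x) (n : ℕ) :
    qa α x (n + 1) * betaP α x n + ea α x n * (qa α x n * betaP α x (n + 1)) = 1 := by
  induction n with
  | zero => norm_num [qa, betaP]
  | succ n ih =>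
    rw [betaP_succ] at ih
    rw [qa_add_two, betaP_succ (n + 1), betaP_succ n]
    linear_combination (qa α x (n + 1) * betaP α x n) * aa_mul_xa_add (α := α) hirr hx0 n + ih

theorem abs_betaP_sub_inv_qa_le (hα : α ∈ Icc (0 : ℝ) 1) (hirr : Irrational x)
    (hx : x ∈ Ioc (0 : ℝ) 1) (n : ℕ) :
    |betaP α x n - (qa α x (n + 1))⁻¹| ≤ betaP α x (n + 1) := by
  have hq := one_le_qa_succ hα hirr hx n
  obtain ⟨hq0, hqle⟩ := qa_nonneg_and_le_succ hα hirr hx n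
  have hβ := (betaP_pos (α := α) hirr hx.1 (n + 1)).le
  have heq : betaP α x n - (qa α x (n + 1))⁻¹ =
      -(ea α x n * (qa α x n * betaP α x (n + 1))) / qa α x (n + 1) := by
    field_simp
    linear_combination qa_succ_mul_betaP_add (α := α) hirr hx.1 n
  have hε : |ea α x n| = 1 := by
    rcases ea_eq_one_or_neg_one (α := α) (x := x) n with he | he <;> simp [he]
  rw [heq, abs_div, abs_neg, abs_mul, hε, one_mul, abs_of_nonneg (mul_nonneg hq0 hβ),
    abs_of_pos (by linarith), div_le_iff₀ (by linarith)]
  nlinarith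

theorem xa_mul_xa_succ_le (hα : α ∈ Icc (0 : ℝ) 1) (hirr : Irrational x)
    (hx : x ∈ Ioc (0 : ℝ) 1) (n : ℕ) : xa α x n * xa α x (n + 1) ≤ max (1 / 2) (1 - α) := by
  have h0 := xa_pos (α := α) hirr hx.1 n
  have h1 := xa_le_one hα hx.2 (n + 1)
  have hsum := aa_mul_xa_add (α := α) hirr hx.1 n
  rcases ea_eq_one_or_neg_one (α := α) (x := x) (n + 1) with he | he
  · have ha := one_le_aa hα.2 h0 (xa_le_one hα hx.2 n)
    rw [he] at hsum
    refine le_max_of_le_left ?_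
    nlinarith
  · refine le_max_of_le_right ?_
    nlinarith [xa_succ_le_of_ea_eq_neg_one he, xa_le_one hα hx.2 n,
      xa_pos (α := α) hirr hx.1 (n + 1)]

theorem sum_betaP_le (hα : α ∈ Ioc (0 : ℝ) 1) (hirr : Irrational x)
    (hx : x ∈ Ioc (0 : ℝ) 1) (N : ℕ) :
    ∑ n ∈ range N, betaP α x n ≤ 2 / (1 - max (1 / 2) (1 - α)) :=
  sum_range_prod_le_of_mul_succ_le (fun n => (xa_pos hirr hx.1 n).le)
    (xa_le_one (Ioc_subset_Icc_self hα) hx.2)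
    (xa_mul_xa_succ_le (Ioc_subset_Icc_self hα) hirr hx)
    (max_lt (by norm_num) (by linarith [hα.1])) N

theorem aa_mul_xa_le_two (hα : α ∈ Icc (0 : ℝ) 1) (hirr : Irrational x)
    (hx : x ∈ Ioc (0 : ℝ) 1) (n : ℕ) : aa α x n * xa α x n ≤ 2 := by
  have h0 := xa_pos (α := α) hirr hx.1 n
  have h1 := xa_le_one hα hx.2 n
  have h1' := xa_le_one hα hx.2 (n + 1)
  have hsum := aa_mul_xa_add (α := α) hirr hx.1 n
  rcases ea_eq_one_or_neg_one (α := α) (x := x) (n + 1) with he | he <;> rw [he] at hsum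
  · nlinarith [xa_pos (α := α) hirr hx.1 (n + 1)]
  · nlinarith

theorem abs_u_xa_sub_u_inv_aa_le (hα : α ∈ Icc (0 : ℝ) 1) (hirr : Irrational x)
    (hx : x ∈ Ioc (0 : ℝ) 1) {u : ℝ → ℝ} {M₁ M₂ : ℝ}
    (hM₁ : ∀ y ∈ Ioc (0 : ℝ) 1, |y * u y| ≤ M₁)
    (hu : ∀ y ∈ Ioc 0 (1 + α)⁻¹, DifferentiableAt ℝ u y)
    (hM₂ : ∀ y ∈ Ioc 0 (1 + α)⁻¹, |y ^ 2 * deriv u y| ≤ M₂) (n : ℕ) :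
    |u (xa α x n) - u (aa α x n : ℝ)⁻¹| ≤ 3 * M₁ + M₂ := by
  have h0 := xa_pos (α := α) hirr hx.1 n
  have h1 := xa_le_one hα hx.2 n
  have hM₁0 : 0 ≤ M₁ := (abs_nonneg _).trans (hM₁ 1 ⟨one_pos, le_rfl⟩)
  have hM₂0 : 0 ≤ M₂ := (abs_nonneg _).trans (hM₂ _ ⟨inv_pos.2 (by linarith [hα.1]), le_rfl⟩)
  by_cases ha2 : (2 : ℝ) ≤ aa α x n
  · have hs : 1 + α ≤ 1 / xa α x n := by linarith [aa_le (α := α) (x := x) n]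
    have hlip := abs_sub_le_of_abs_sq_mul_deriv_le (by linarith [hα.1]) hu hM₂ hs
      (by linarith [hα.2] : 1 + α ≤ aa α x n)
    rw [← xa_succ_eq_abs, one_div, inv_inv] at hlip
    calc _ ≤ M₂ * xa α x (n + 1) := hlip
      _ ≤ M₂ := mul_le_of_le_one_right hM₂0 (xa_le_one hα hx.2 _)
      _ ≤ 3 * M₁ + M₂ := by linarith
  · have ha1 : aa α x n = 1 := by
      have h₁ : (1 : ℤ) ≤ aa α x n := by exact_mod_cast one_le_aa hα.2 h0 h1
      have h₂ : aa α x n < 2 := by exact_mod_cast not_le.1 ha2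
      omega
    have ha1' : (aa α x n : ℝ) = 1 := by exact_mod_cast ha1
    have hinv : 1 / xa α x n ≤ 2 := by linarith [lt_aa (α := α) (x := x) n, hα.2]
    rw [ha1', inv_one]
    calc _ ≤ |u (xa α x n)| + |u 1| := abs_sub _ _
      _ ≤ M₁ * (1 / xa α x n) + M₁ := by
          rw [mul_one_div]
          exact add_le_add (abs_le_div_of_abs_mul_self_le h0 (hM₁ _ ⟨h0, h1⟩))
            (by simpa using hM₁ 1 ⟨one_pos, le_rfl⟩)
      _ ≤ M₁ * 2 + M₁ := by gcongr
      _ ≤ 3 * M₁ + M₂ := by linarith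

theorem abs_betaP_mul_sub_div_qa_le (hα : α ∈ Icc (0 : ℝ) 1) (hirr : Irrational x)
    (hx : x ∈ Ioc (0 : ℝ) 1) {u : ℝ → ℝ} {M₁ M₂ : ℝ}
    (hM₁ : ∀ y ∈ Ioc (0 : ℝ) 1, |y * u y| ≤ M₁)
    (hu : ∀ y ∈ Ioc 0 (1 + α)⁻¹, DifferentiableAt ℝ u y)
    (hM₂ : ∀ y ∈ Ioc 0 (1 + α)⁻¹, |y ^ 2 * deriv u y| ≤ M₂) (n : ℕ) :
    |betaP α x n * u (xa α x n) - u (aa α x n : ℝ)⁻¹ / qa α x (n + 1)| ≤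
      (5 * M₁ + M₂) * betaP α x n := by
  set a : ℝ := (aa α x n : ℝ)
  set β := betaP α x n
  have h0 := xa_pos (α := α) hirr hx.1 n
  have ha : 1 ≤ a := one_le_aa hα.2 h0 (xa_le_one hα hx.2 n)
  have hβ : 0 < β := betaP_pos hirr hx.1 n
  have hM₁0 : 0 ≤ M₁ := (abs_nonneg _).trans (hM₁ 1 ⟨one_pos, le_rfl⟩)
  have hua : |u a⁻¹| ≤ M₁ * a := by
    simpa using abs_le_div_of_abs_mul_self_le (inv_pos.2 (by linarith))
      (hM₁ a⁻¹ ⟨inv_pos.2 (by linarith), inv_le_one_of_one_le₀ ha⟩)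
  calc _ = |β * (u (xa α x n) - u a⁻¹) + u a⁻¹ * (β - (qa α x (n + 1))⁻¹)| := by ring_nf
    _ ≤ |β * (u (xa α x n) - u a⁻¹)| + |u a⁻¹ * (β - (qa α x (n + 1))⁻¹)| := abs_add_le _ _
    _ = β * |u (xa α x n) - u a⁻¹| + |u a⁻¹| * |β - (qa α x (n + 1))⁻¹| := by
        rw [abs_mul, abs_mul, abs_of_pos hβ]
    _ ≤ β * (3 * M₁ + M₂) + (M₁ * a) * (β * xa α x n) := by
        gcongr
        · exact abs_u_xa_sub_u_inv_aa_le hα hirr hx hM₁ hu hM₂ n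
        · exact betaP_succ (α := α) (x := x) n ▸ abs_betaP_sub_inv_qa_le hα hirr hx n
    _ = β * (3 * M₁ + M₂) + M₁ * (a * xa α x n) * β := by ring
    _ ≤ β * (3 * M₁ + M₂) + M₁ * 2 * β := by gcongr; exact aa_mul_xa_le_two hα hirr hx n
    _ = (5 * M₁ + M₂) * β := by ring

end AlphaContinuedFraction

open AlphaContinuedFraction in
theorem truncated_brjuno_close_to_q_series (α : ℝ) (hα : α ∈ Set.Ioc (0 : ℝ) 1)
    (u : ℝ → ℝ)
    (hcont : ContinuousOn u (Set.Ioc 0 1))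
    (hC1 : ContDiffOn ℝ 1 u (Set.Ioo 0 1))
    (hxu : ∃ L : ℝ, Tendsto (fun y => y * u y) (nhdsWithin 0 (Set.Ioi 0)) (nhds L))
    (hx2u : ∃ L : ℝ, Tendsto (fun y => y ^ 2 * deriv u y) (nhdsWithin 0 (Set.Ioi 0)) (nhds L)) :
    ∃ C : ℝ, 0 < C ∧ ∀ x : ℝ, Irrational x → x ∈ Set.Ioo 0 (max α (1 - α)) → ∀ N : ℕ,
      |∑ n ∈ Finset.range (N + 1), betaP α x n * u (xa α x n) -
        ∑ n ∈ Finset.range (N + 1), u (((aa α x n : ℝ))⁻¹) / qa α x (n + 1)| < C := by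
  have hα' := Ioc_subset_Icc_self hα
  obtain ⟨L₁, hL₁⟩ := hxu
  obtain ⟨L₂, hL₂⟩ := hx2u
  have hsub : Ioc 0 (1 + α)⁻¹ ⊆ Ioo (0 : ℝ) 1 := fun y hy =>
    ⟨hy.1, hy.2.trans_lt (inv_lt_one_of_one_lt₀ (by linarith [hα.1]))⟩
  obtain ⟨M₁, hM₁⟩ := exists_abs_le_of_continuousOn_Ioc (continuousOn_id.mul hcont) hL₁
  obtain ⟨M₂, hM₂⟩ := exists_abs_le_of_continuousOn_Ioc ((continuousOn_pow 2).mul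
    ((hC1.continuousOn_deriv_of_isOpen isOpen_Ioo le_rfl).mono hsub)) hL₂
  have hu : ∀ y ∈ Ioc 0 (1 + α)⁻¹, DifferentiableAt ℝ u y := fun y hy =>
    (hC1.contDiffAt (isOpen_Ioo.mem_nhds (hsub hy))).differentiableAt one_ne_zero
  set K := 2 / (1 - max (1 / 2) (1 - α))
  have hK : 0 < K := div_pos two_pos (sub_pos.2 (max_lt (by norm_num) (by linarith [hα.1])))
  refine ⟨|5 * M₁ + M₂| * K + 1, by positivity, fun x hirr hxα N => ?_⟩
  have hx : x ∈ Ioc (0 : ℝ) 1 := ⟨hxα.1, hxα.2.le.trans (max_one_sub_le_one hα')⟩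
  rw [← Finset.sum_sub_distrib]
  calc _ ≤ ∑ n ∈ range (N + 1), (5 * M₁ + M₂) * betaP α x n :=
        (abs_sum_le_sum_abs _ _).trans (sum_le_sum fun n _ =>
          abs_betaP_mul_sub_div_qa_le hα' hirr hx hM₁ hu hM₂ n)
    _ ≤ |5 * M₁ + M₂| * ∑ n ∈ range (N + 1), betaP α x n := by
        rw [← mul_sum]
        exact mul_le_mul_of_nonneg_right (le_abs_self _)
          (sum_nonneg fun n _ => (betaP_pos hirr hx.1 n).le)
    _ ≤ |5 * M₁ + M₂| * K := by gcongr; exact sum_betaP_le hα hirr hx _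
    _ < |5 * M₁ + M₂| * K + 1 := lt_add_one _
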